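/- arXiv:2605.31386 — 5 statements merged into one kernel-verified Lean document; each statement's English description precedes it below -/
import Mathlib

section
/- Let 0 < m < M, S = √(M² + (M−m)²), R_2 = (S−M)/(2m+S−M), and R_1 = (M−m)/(M+m). Then R_2 < R_1², i.e. (S−M)/(2m+S−M) < ((M−m)/(M+m))². -/
/-- **The optimal two-step rate strictly beats the squared one-step rate:**
with `S = √(M² + (M−m)²)`, `R₂ = (S−M)/(2m+S−M)` and `R₁ = (M−m)/(M+m)`, one has
`R₂ < R₁²`. -/
theorem two_step_rate_strictly_better (m M : ℝ) (hm : 0 < m) (hmM : m < M)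
    (S : ℝ) (hS : S = Real.sqrt (M ^ 2 + (M - m) ^ 2)) :
    (S - M) / (2 * m + S - M) < ((M - m) / (M + m)) ^ 2 := by
  have hM : 0 < M := hm.trans hmM
  have hnn : (0:ℝ) ≤ M ^ 2 + (M - m) ^ 2 := by positivity
  have hS2 : S ^ 2 = M ^ 2 + (M - m) ^ 2 := by rw [hS, Real.sq_sqrt hnn]
  have hSM : M ≤ S := by
    rw [hS]
    have : M = Real.sqrt (M ^ 2) := by rw [Real.sqrt_sq hM.le]
    rw [this]
    exact Real.sqrt_le_sqrt (by nlinarith)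
  have hub : S < M + (M - m) ^ 2 / (2 * M) := by
    rw [hS]
    rw [show M + (M - m) ^ 2 / (2 * M) = Real.sqrt ((M + (M - m) ^ 2 / (2 * M)) ^ 2) from
      (Real.sqrt_sq (by positivity)).symm]
    apply Real.sqrt_lt_sqrt hnn
    have h2M : (0:ℝ) < 2 * M := by positivity
    have : (M + (M - m) ^ 2 / (2 * M)) ^ 2 =
        M ^ 2 + (M - m) ^ 2 + ((M - m) ^ 2 / (2 * M)) ^ 2 := by
      field_simp; ring
    rw [this]
    have hmm : 0 < M - m := by linarith
    have hc : 0 < ((M - m) ^ 2 / (2 * M)) ^ 2 := by positivity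
    linarith
  have hD : 0 < 2 * m + S - M := by linarith
  have hub' : (S - M) * (2 * M) < (M - m) ^ 2 :=
    (lt_div_iff₀ (by positivity)).mp (by linarith)
  rw [div_lt_iff₀ hD, div_pow, div_mul_eq_mul_div,
    lt_div_iff₀ (by positivity : (0:ℝ) < (M + m) ^ 2)]
  nlinarith [mul_lt_mul_of_pos_left hub' hm]
end

section
/- For κ > 1, set m = 1, M = κ, S(κ) = √(κ² + (κ−1)²), R_2(κ) = (S(κ)−κ)/(2 + S(κ)−κ), and R_1(κ) = (κ−1)/(κ+1). Then lim_{κ→∞} κ·(1 − R_2(κ)) = 2(1+√2) and lim_{κ→∞} κ·(1 − R_1(κ)²) = 4. -/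
/-!
Both quantities are continuous functions of `t = 1/κ` near `t = 0`: since
`1 - R₂ = 2 / (2 + S - κ)` and `S = κ √(1 + (1 - t)²)`, one gets
`κ (1 - R₂) = 2 / (2t + √(1 + (1 - t)²) - 1)`, which at `t = 0` equals `2 / (√2 - 1) = 2(1 + √2)`;
likewise `κ (1 - R₁²) = 4κ² / (κ + 1)² = 4 / (1 + t)²`, which equals `4` at `t = 0`.
-/

open Filter Topology

theorem Filter.Tendsto.atTop_of_eventually_eq_comp_inv {α : Type*} [TopologicalSpace α]
    {f g : ℝ → α} (hg : ContinuousAt g 0)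
    (hfg : ∀ᶠ x in atTop, g x⁻¹ = f x) : Tendsto f atTop (𝓝 (g 0)) :=
  (hg.tendsto.comp tendsto_inv_atTop_zero).congr' hfg

theorem two_div_sqrt_two_sub_one : 2 / (Real.sqrt 2 - 1) = 2 * (1 + Real.sqrt 2) := by
  have hsq : Real.sqrt 2 ^ 2 = 2 := Real.sq_sqrt zero_le_two
  rw [div_eq_iff (sub_ne_zero.mpr Real.one_lt_sqrt_two.ne')]
  linear_combination -2 * hsq

theorem sqrt_sq_add_sub_one_sq_eq {κ : ℝ} (hκ : 0 < κ) :
    Real.sqrt (κ ^ 2 + (κ - 1) ^ 2) = κ * Real.sqrt (1 + (1 - κ⁻¹) ^ 2) := by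
  have h : κ ^ 2 + (κ - 1) ^ 2 = κ ^ 2 * (1 + (1 - κ⁻¹) ^ 2) := by
    field_simp
  rw [h, Real.sqrt_mul (sq_nonneg κ), Real.sqrt_sq hκ.le]

theorem mul_one_sub_two_step_rate_eq {κ : ℝ} (hκ : 0 < κ) :
    κ * (1 - (Real.sqrt (κ ^ 2 + (κ - 1) ^ 2) - κ) / (2 + Real.sqrt (κ ^ 2 + (κ - 1) ^ 2) - κ)) =
      2 / (2 * κ⁻¹ + Real.sqrt (1 + (1 - κ⁻¹) ^ 2) - 1) := by
  rw [sqrt_sq_add_sub_one_sq_eq hκ]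
  set s := Real.sqrt (1 + (1 - κ⁻¹) ^ 2)
  have hs : 1 ≤ s := Real.one_le_sqrt.mpr (le_add_of_nonneg_right (sq_nonneg _))
  have hden : 0 < 2 + κ * s - κ := by nlinarith
  have hden' : 0 < 2 * κ⁻¹ + s - 1 := by linarith [inv_pos.mpr hκ]
  field_simp
  ring

theorem mul_one_sub_one_step_rate_sq_eq {κ : ℝ} (hκ : 0 < κ) :
    κ * (1 - ((κ - 1) / (κ + 1)) ^ 2) = 4 / (1 + κ⁻¹) ^ 2 := by
  field_simp
  ring

/-- **Asymptotics of the two-step vs one-step rates:** as `κ → ∞`, with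
`S(κ) = √(κ² + (κ−1)²)`, `R₂(κ) = (S(κ)−κ)/(2+S(κ)−κ)` and `R₁(κ) = (κ−1)/(κ+1)`,
one has `κ(1 − R₂(κ)) → 2(1+√2)` (the silver ratio appears) while `κ(1 − R₁(κ)²) → 4`. -/
theorem two_step_rate_asymptotics :
    Tendsto
      (fun κ : ℝ =>
        κ * (1 - (Real.sqrt (κ ^ 2 + (κ - 1) ^ 2) - κ) /
          (2 + Real.sqrt (κ ^ 2 + (κ - 1) ^ 2) - κ)))
      atTop (𝓝 (2 * (1 + Real.sqrt 2))) ∧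
    Tendsto (fun κ : ℝ => κ * (1 - ((κ - 1) / (κ + 1)) ^ 2)) atTop (𝓝 4) := by
  constructor
  · have hlim := Tendsto.atTop_of_eventually_eq_comp_inv
      (g := fun t => 2 / (2 * t + Real.sqrt (1 + (1 - t) ^ 2) - 1)) ?_
      ((eventually_gt_atTop 0).mono fun κ hκ => (mul_one_sub_two_step_rate_eq hκ).symm)
    · norm_num at hlim
      rwa [two_div_sqrt_two_sub_one] at hlim
    · refine ContinuousAt.div continuousAt_const (by fun_prop) ?_
      norm_num [sub_eq_zero, Real.sqrt_eq_one]
  · have hlim := Tendsto.atTop_of_eventually_eq_comp_inv (g := fun t => 4 / (1 + t) ^ 2)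
      (ContinuousAt.div continuousAt_const (by fun_prop) (by norm_num))
      ((eventually_gt_atTop 0).mono fun κ hκ => (mul_one_sub_one_step_rate_sq_eq hκ).symm)
    simpa using hlim
end

section
/- Fix 0 < m < M and an integer n ≥ 1. For t = 0, …, n−1 let λ_t = (M+m)/2 + ((M−m)/2)·cos((2t+1)π/(2n)) and define the Chebyshev stepsizes α_t = 1/λ_t. Then for every dimension d, every real symmetric d×d matrix H with mI ⪯ H ⪯ MI, and every x_0 ∈ ℝ^d, the gradient descent iterates for f(x) = (1/2)xᵀHx, namely x_{t+1} = (I − α_t H) x_t, satisfy ‖x_n‖ ≤ ‖x_0‖ / T_n((M+m)/(M−m)), where T_n is the degree-n Chebyshev polynomial of the first kind. -/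
/-!
After `n` steps, `x n = p(H) (x 0)` with `p(μ) = ∏ₜ (1 - αₜ μ)`, so in an orthonormal eigenbasis
of `H` each coordinate of `x 0` is multiplied by `p` at the corresponding eigenvalue, and
`‖x n‖ ≤ max_{μ ∈ [m, M]} |p(μ)| · ‖x 0‖`. The roots of `p` are the `λₜ`, the images of the roots
of `Tₙ` under the affine map `[-1, 1] → [m, M]`, and `p(0) = 1`; hence
`p(μ) = Tₙ((2μ - M - m)/(M - m)) / Tₙ(-(M + m)/(M - m))`, whose numerator has absolute value at
most `1` on `[m, M]`.
-/

open Polynomial Polynomial.Chebyshev Real Finset Module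

open scoped RealInnerProductSpace

noncomputable def chebyshevRoot (n k : ℕ) : ℝ := cos ((2 * k + 1) * π / (2 * n))

-- The truncated exponent `n - 1` is also right for `n = 0`, where both sides are `1`.
theorem eval_T_real_eq_prod (n : ℕ) (x : ℝ) :
    (T ℝ n).eval x = 2 ^ (n - 1) * ∏ k ∈ range n, (x - chebyshevRoot n k) := by
  have hroots : (T ℝ n).roots = (range n).val.map (chebyshevRoot n) := by
    rw [roots_T_real, Finset.image_val, Finset.range_val, (roots_T_real_nodup n).dedup]
    rfl
  have hcard : Multiset.card (T ℝ n).roots = (T ℝ n).natDegree := by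
    simp [hroots, natDegree_T]
  conv_lhs => rw [← C_leadingCoeff_mul_prod_multiset_X_sub_C hcard]
  simp [eval_multiset_prod, hroots, Finset.prod_eq_multiset_prod]

theorem abs_eval_T_real_neg (n : ℤ) (x : ℝ) : |(T ℝ n).eval (-x)| = |(T ℝ n).eval x| := by
  simp [abs_mul]

theorem eval_T_real_div_eq_prod (n : ℕ) {r : ℝ} (hr : r ≠ 0) (c μ : ℝ) :
    (T ℝ n).eval ((μ - c) / r) =
      2 ^ (n - 1) / r ^ n * ∏ k ∈ range n, (μ - (c + r * chebyshevRoot n k)) := by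
  have hfactor (k : ℕ) :
      (μ - c) / r - chebyshevRoot n k = (μ - (c + r * chebyshevRoot n k)) / r := by
    field_simp
    ring
  simp_rw [eval_T_real_eq_prod, hfactor, prod_div_distrib, prod_const, card_range]
  ring

theorem prod_one_sub_div_eq_eval_T_real_div (n : ℕ) {c r : ℝ} (hr : r ≠ 0) (hrc : |r| < c)
    (μ : ℝ) :
    ∏ k ∈ range n, (1 - μ / (c + r * chebyshevRoot n k)) =
      (T ℝ n).eval ((μ - c) / r) / (T ℝ n).eval ((0 - c) / r) := by
  have hroot_ne (k : ℕ) : c + r * chebyshevRoot n k ≠ 0 := by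
    have : |r * chebyshevRoot n k| ≤ |r| := by
      rw [abs_mul]
      exact mul_le_of_le_one_right (abs_nonneg r) (abs_cos_le_one _)
    linarith [neg_abs_le (r * chebyshevRoot n k)]
  have hscale : (2 : ℝ) ^ (n - 1) / r ^ n ≠ 0 := by positivity
  rw [eval_T_real_div_eq_prod n hr, eval_T_real_div_eq_prod n hr, mul_div_mul_left _ _ hscale,
    ← prod_div_distrib]
  refine prod_congr rfl fun k _ => ?_
  rw [zero_sub, div_neg, ← neg_div, neg_sub, sub_div, div_self (hroot_ne k)]

theorem abs_prod_one_sub_div_le (n : ℕ) {c r : ℝ} (hr : 0 < r) (hrc : r < c) {μ : ℝ}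
    (hμ : |μ - c| ≤ r) :
    |∏ k ∈ range n, (1 - μ / (c + r * chebyshevRoot n k))| ≤ 1 / (T ℝ n).eval (c / r) := by
  have hT_pos : 0 < (T ℝ n).eval (c / r) :=
    one_pos.trans_le (one_le_eval_T_real n ((one_le_div hr).2 hrc.le))
  have hμ' : |(μ - c) / r| ≤ 1 := by
    rwa [abs_div, abs_of_pos hr, div_le_one hr]
  rw [prod_one_sub_div_eq_eval_T_real_div n hr.ne' (by rwa [abs_of_pos hr]), zero_sub, neg_div,
    abs_div, abs_eval_T_real_neg, abs_of_pos hT_pos]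
  exact div_le_div_of_nonneg_right (abs_eval_T_real_le_one n hμ') hT_pos.le

theorem abs_prod_one_sub_chebyshev_stepsize_mul_le {m M : ℝ} (hm : 0 < m) (hmM : m < M)
    {n : ℕ} {α : ℕ → ℝ}
    (hα : ∀ t < n, α t = 1 / ((M + m) / 2 + (M - m) / 2 * chebyshevRoot n t))
    {μ : ℝ} (hμ : μ ∈ Set.Icc m M) :
    |∏ t ∈ range n, (1 - α t * μ)| ≤ 1 / (T ℝ n).eval ((M + m) / (M - m)) := by
  have hstep : ∀ t ∈ range n, 1 - α t * μ =
      1 - μ / ((M + m) / 2 + (M - m) / 2 * chebyshevRoot n t) := fun t ht => by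
    rw [hα t (mem_range.1 ht), one_div_mul_eq_div]
  have hμ' : |μ - (M + m) / 2| ≤ (M - m) / 2 :=
    abs_sub_le_iff.2 ⟨by linarith [hμ.2], by linarith [hμ.1]⟩
  have hratio : (M + m) / (M - m) = (M + m) / 2 / ((M - m) / 2) :=
    (div_div_div_cancel_right₀ two_ne_zero _ _).symm
  rw [prod_congr rfl hstep, hratio]
  exact abs_prod_one_sub_div_le n (by linarith) (by linarith) hμ'

theorem OrthonormalBasis.norm_le_mul_norm_of_abs_inner_le {ι E : Type*} [Fintype ι]
    [NormedAddCommGroup E] [InnerProductSpace ℝ E] (b : OrthonormalBasis ι ℝ E) {x y : E}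
    {c : ℝ} (hc : 0 ≤ c) (h : ∀ i, |⟪b i, x⟫| ≤ c * |⟪b i, y⟫|) :
    ‖x‖ ≤ c * ‖y‖ := by
  refine abs_le_of_sq_le_sq' ?_ (by positivity) |>.2
  rw [mul_pow, ← b.sum_sq_inner_right, ← b.sum_sq_inner_right, mul_sum]
  refine sum_le_sum fun i _ => ?_
  rw [← sq_abs, ← sq_abs ⟪b i, y⟫, ← mul_pow]
  exact pow_le_pow_left₀ (abs_nonneg _) (h i) 2

namespace LinearMap.IsSymmetric

variable {E : Type*} [NormedAddCommGroup E] [InnerProductSpace ℝ E] [FiniteDimensional ℝ E]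
  {T : E →ₗ[ℝ] E} (hT : T.IsSymmetric) {d : ℕ} (hd : finrank ℝ E = d)

theorem inner_eigenvectorBasis_apply (x : E) (i : Fin d) :
    ⟪hT.eigenvectorBasis hd i, T x⟫ =
      hT.eigenvalues hd i * ⟪hT.eigenvectorBasis hd i, x⟫ := by
  rw [← hT, hT.apply_eigenvectorBasis, real_inner_smul_left, RCLike.ofReal_real_eq_id, id_eq]

theorem inner_eigenvectorBasis_gradientDescent {α : ℕ → ℝ} {x : ℕ → E}
    (hx : ∀ t, x (t + 1) = x t - α t • T (x t)) (t : ℕ) (i : Fin d) :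
    ⟪hT.eigenvectorBasis hd i, x t⟫ =
      (∏ s ∈ Finset.range t, (1 - α s * hT.eigenvalues hd i)) *
        ⟪hT.eigenvectorBasis hd i, x 0⟫ := by
  induction t with
  | zero => simp
  | succ t ih =>
    rw [hx, inner_sub_right, real_inner_smul_right, inner_eigenvectorBasis_apply, ih,
      prod_range_succ]
    ring

theorem norm_gradientDescent_le {α : ℕ → ℝ} {x : ℕ → E}
    (hx : ∀ t, x (t + 1) = x t - α t • T (x t)) (n : ℕ) {c : ℝ} (hc : 0 ≤ c)
    (hbound : ∀ i, |∏ t ∈ Finset.range n, (1 - α t * hT.eigenvalues hd i)| ≤ c) :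
    ‖x n‖ ≤ c * ‖x 0‖ := by
  refine (hT.eigenvectorBasis hd).norm_le_mul_norm_of_abs_inner_le hc fun i => ?_
  rw [inner_eigenvectorBasis_gradientDescent hT hd hx, abs_mul]
  exact mul_le_mul_of_nonneg_right (hbound i) (abs_nonneg _)

theorem eigenvalues_mem_Icc {m M : ℝ} (hm : (T - m • id).IsPositive)
    (hM : (M • id - T).IsPositive) (i : Fin d) : hT.eigenvalues hd i ∈ Set.Icc m M := by
  have hm' := hm.inner_nonneg_left (hT.eigenvectorBasis hd i)
  have hM' := hM.inner_nonneg_left (hT.eigenvectorBasis hd i)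
  simp only [sub_apply, smul_apply, id_apply, hT.apply_eigenvectorBasis, inner_sub_left,
    real_inner_smul_left, real_inner_self_eq_norm_sq, OrthonormalBasis.norm_eq_one,
    RCLike.ofReal_real_eq_id, id_eq, one_pow, mul_one, sub_nonneg] at hm' hM'
  exact ⟨hm', hM'⟩

end LinearMap.IsSymmetric

theorem chebyshev_stepsizes_quadratic_general (m M : ℝ) (hm : 0 < m) (hmM : m < M)
    (n : ℕ) (α : ℕ → ℝ)
    (hα : ∀ t < n, α t =
      1 / ((M + m) / 2 + (M - m) / 2 * Real.cos ((2 * t + 1) * Real.pi / (2 * n)))) :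
    ∀ (d : ℕ) (H : Matrix (Fin d) (Fin d) ℝ),
      H.IsSymm →
      (H - m • (1 : Matrix (Fin d) (Fin d) ℝ)).PosSemidef →
      (M • (1 : Matrix (Fin d) (Fin d) ℝ) - H).PosSemidef →
      ∀ x : ℕ → EuclideanSpace ℝ (Fin d),
        (∀ t, x (t + 1) = x t - α t • Matrix.toEuclideanLin H (x t)) →
        ‖x n‖ ≤ ‖x 0‖ / (Polynomial.Chebyshev.T ℝ (n : ℤ)).eval ((M + m) / (M - m)) := by
  intro d H hH hmH hHM x hx
  have hT : (Matrix.toEuclideanLin H).IsSymmetric :=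
    Matrix.isSymmetric_toEuclideanLin_iff.2 (Matrix.isHermitian_iff_isSymm.2 hH)
  have hlow : (Matrix.toEuclideanLin H - m • LinearMap.id).IsPositive := by
    simpa using Matrix.isPositive_toEuclideanLin_iff.2 hmH
  have hup : (M • LinearMap.id - Matrix.toEuclideanLin H).IsPositive := by
    simpa using Matrix.isPositive_toEuclideanLin_iff.2 hHM
  have hT_pos : 0 < (T ℝ n).eval ((M + m) / (M - m)) :=
    one_pos.trans_le (one_le_eval_T_real n ((one_le_div (by linarith)).2 (by linarith)))
  rw [div_eq_inv_mul, ← one_div]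
  exact hT.norm_gradientDescent_le rfl hx n (one_div_pos.2 hT_pos).le fun i =>
    abs_prod_one_sub_chebyshev_stepsize_mul_le hm hmM hα (hT.eigenvalues_mem_Icc rfl hlow hup i)

/-- **Chebyshev stepsizes for quadratic optimization** (Young 1953): with
`λ_t = (M+m)/2 + ((M−m)/2)·cos((2t+1)π/(2n))` and stepsizes `α_t = 1/λ_t`, gradient
descent on any quadratic `f(x) = ½xᵀHx` with `H` symmetric and `mI ⪯ H ⪯ MI` satisfies
`‖xₙ‖ ≤ ‖x₀‖ / Tₙ((M+m)/(M−m))`, where `Tₙ` is the Chebyshev polynomial of the first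
kind. -/
theorem chebyshev_stepsizes_quadratic (m M : ℝ) (hm : 0 < m) (hmM : m < M)
    (n : ℕ) (hn : 1 ≤ n) (α : ℕ → ℝ)
    (hα : ∀ t < n, α t =
      1 / ((M + m) / 2 + (M - m) / 2 * Real.cos ((2 * t + 1) * Real.pi / (2 * n)))) :
    ∀ (d : ℕ) (H : Matrix (Fin d) (Fin d) ℝ),
      H.IsSymm →
      (H - m • (1 : Matrix (Fin d) (Fin d) ℝ)).PosSemidef →
      (M • (1 : Matrix (Fin d) (Fin d) ℝ) - H).PosSemidef →
      ∀ x : ℕ → EuclideanSpace ℝ (Fin d),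
        (∀ t, x (t + 1) = x t - α t • Matrix.toEuclideanLin H (x t)) →
        ‖x n‖ ≤ ‖x 0‖ / (Polynomial.Chebyshev.T ℝ (n : ℤ)).eval ((M + m) / (M - m)) :=
  chebyshev_stepsizes_quadratic_general m M hm hmM n α hα
end

section
/- Let 0 < m < M and let n be a natural number. For every real polynomial p of degree at most n with p(0) = 1, we have sup_{λ ∈ [m, M]} |p(λ)| ≥ 1 / T_n((M+m)/(M−m)), where T_n is the degree-n Chebyshev polynomial of the first kind. Moreover, equality is achieved by the translated and scaled Chebyshev polynomial p(λ) = T_n((M+m−2λ)/(M−m)) / T_n((M+m)/(M−m)). -/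
/-! By Lagrange interpolation on the extremal nodes `cos (kπ/n)` of `Tₙ`, a polynomial of degree
at most `n` bounded by `c` on `[-1, 1]` is at most `c · Tₙ(x)` at every `x ≥ 1`. The affine change
of variable `λ ↦ (M + m - 2λ) / (M - m)` carries `[m, M]` onto `[-1, 1]` and `0` to
`(M + m) / (M - m) ≥ 1`, which gives the lower bound. The rescaled Chebyshev polynomial attains
it because `|Tₙ| ≤ 1` on `[-1, 1]` and `Tₙ(1) = 1`, the value at `λ = m`. -/

open Polynomial Polynomial.Chebyshev Set

theorem Polynomial.Chebyshev.eval_le_mul_eval_T_real_of_forall_abs_le {n : ℕ} {P : ℝ[X]}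
    (hPdeg : P.degree ≤ n) {c : ℝ} (hPbnd : ∀ y ∈ Icc (-1 : ℝ) 1, |P.eval y| ≤ c)
    {x : ℝ} (hx : 1 ≤ x) : P.eval x ≤ c * (T ℝ n).eval x := by
  rcases (abs_nonneg _).trans (hPbnd 0 (by norm_num)) |>.eq_or_lt with hc | hc
  · have hP : P = 0 := eq_zero_of_infinite_isRoot P <|
      (Icc_infinite (by norm_num : (-1 : ℝ) < 1)).mono fun y hy => by
        simpa [← hc] using hPbnd y hy
    simp [hP, ← hc]
  · have hscaled := eval_iterate_derivative_le_of_forall_abs_le_one (k := 0) hx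
      ((degree_smul_le _ _).trans hPdeg) (P := c⁻¹ • P) fun y hy => by
        rw [eval_smul, smul_eq_mul, abs_mul, abs_of_pos (inv_pos.mpr hc), inv_mul_le_one₀ hc]
        exact hPbnd y hy
    simp only [Function.iterate_zero, id_eq, eval_smul, smul_eq_mul] at hscaled
    rwa [inv_mul_le_iff₀ hc] at hscaled

theorem Polynomial.Chebyshev.eval_le_sSup_mul_eval_T_real {n : ℕ} {p : ℝ[X]}
    (hpdeg : p.degree ≤ n) {a b t : ℝ} (hab : a < b) (ht : t ≤ a) :
    p.eval t ≤ sSup ((fun x => |p.eval x|) '' Icc a b) *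
      (T ℝ n).eval ((a + b - 2 * t) / (b - a)) := by
  have hba : 0 < b - a := sub_pos.mpr hab
  -- `ℓ` inverts `x ↦ (a + b - 2x) / (b - a)`, which maps `[a, b]` onto `[-1, 1]`
  set ℓ : ℝ[X] := Polynomial.C ((a - b) / 2) * X + Polynomial.C ((a + b) / 2)
  set P := p.comp ℓ
  have hPeval (y : ℝ) : P.eval y = p.eval ((a - b) / 2 * y + (a + b) / 2) := by simp [P, ℓ]
  have hPdeg : P.degree ≤ n := degree_le_of_natDegree_le <| natDegree_comp_le.trans <|
    (Nat.mul_le_mul (natDegree_le_iff_degree_le.mpr hpdeg) natDegree_linear_le).trans_eq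
      (mul_one n)
  have hbdd : BddAbove ((fun x => |p.eval x|) '' Icc a b) :=
    isCompact_Icc.bddAbove_image p.continuous.abs.continuousOn
  have hPbnd :
      ∀ y ∈ Icc (-1 : ℝ) 1, |P.eval y| ≤ sSup ((fun x => |p.eval x|) '' Icc a b) := by
    rintro y ⟨hy₁, hy₂⟩
    rw [hPeval]
    exact le_csSup hbdd ⟨_, ⟨by nlinarith, by nlinarith⟩, rfl⟩
  have hσ : 1 ≤ (a + b - 2 * t) / (b - a) := by rw [one_le_div₀ hba]; linarith
  have hPσ : P.eval ((a + b - 2 * t) / (b - a)) = p.eval t := by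
    rw [hPeval]; congr 1; field_simp; ring
  rw [← hPσ]
  exact eval_le_mul_eval_T_real_of_forall_abs_le hPdeg hPbnd hσ

/-- **Chebyshev extremality:** among real polynomials `p` of degree at most `n` with
`p(0) = 1`, the sup-norm on `[m, M]` is at least `1 / Tₙ((M+m)/(M−m))`, and this bound is
achieved by the translated and scaled Chebyshev polynomial
`λ ↦ Tₙ((M+m−2λ)/(M−m)) / Tₙ((M+m)/(M−m))`. -/
theorem chebyshev_extremal (m M : ℝ) (hm : 0 < m) (hmM : m < M) (n : ℕ) :
    (∀ p : Polynomial ℝ, p.natDegree ≤ n → p.eval 0 = 1 →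
      sSup ((fun lam => |p.eval lam|) '' Set.Icc m M) ≥
        1 / (Polynomial.Chebyshev.T ℝ (n : ℤ)).eval ((M + m) / (M - m))) ∧
    sSup ((fun lam =>
        |(Polynomial.Chebyshev.T ℝ (n : ℤ)).eval ((M + m - 2 * lam) / (M - m)) /
          (Polynomial.Chebyshev.T ℝ (n : ℤ)).eval ((M + m) / (M - m))|) '' Set.Icc m M) =
      1 / (Polynomial.Chebyshev.T ℝ (n : ℤ)).eval ((M + m) / (M - m)) := by
  have hMm : 0 < M - m := sub_pos.mpr hmM
  have hTσ : 0 < (T ℝ n).eval ((M + m) / (M - m)) :=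
    one_pos.trans_le <| one_le_eval_T_real _ <| by rw [one_le_div₀ hMm]; linarith
  constructor
  · intro p hpdeg hp0
    have h := eval_le_sSup_mul_eval_T_real (degree_le_of_natDegree_le hpdeg) hmM hm.le
    rwa [hp0, mul_zero, sub_zero, add_comm m M, ← div_le_iff₀ hTσ] at h
  · refine IsGreatest.csSup_eq ⟨⟨m, ⟨le_rfl, hmM.le⟩, ?_⟩, ?_⟩
    · beta_reduce
      rw [show (M + m - 2 * m) / (M - m) = 1 by field_simp; ring, T_eval_one,
        abs_of_pos (one_div_pos.mpr hTσ)]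
    · rintro _ ⟨x, ⟨hx₁, hx₂⟩, rfl⟩
      beta_reduce
      rw [abs_div, abs_of_pos hTσ]
      gcongr
      exact abs_eval_T_real_le_one _ <| abs_le.mpr
        ⟨by rw [le_div_iff₀ hMm]; linarith, by rw [div_le_one₀ hMm]; linarith⟩
end

section
/- Let 0 < m < M and let n be a natural number. For every stepsize schedule α_0, …, α_{n-1} ∈ ℝ, there exist a dimension d, a real symmetric d×d matrix H with mI ⪯ H ⪯ MI, and x_0 ≠ 0 such that the gradient descent iterates for f(x) = (1/2)xᵀHx, namely x_{t+1} = (I − α_t H)x_t, satisfy ‖x_n‖ ≥ ‖x_0‖ / T_n((M+m)/(M−m)). That is, no stepsize schedule achieves a worst-case rate over m-strongly convex M-smooth quadratics better than the Chebyshev rate 1/T_n((M+m)/(M−m)). -/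
/-!
After `t` steps on `H = λ I` the iterate is `P_t(λ) x₀`, where `P_t(λ) = ∏_{s<t} (1 - α_s λ)` is a
polynomial of degree at most `t` with `P_t(0) = 1`. The affine change of variables sending
`[-1, 1]` onto `[m, M]` and `ρ = (M + m) / (M - m)` to `0` turns the extremal property of
Chebyshev polynomials, `|p(y)| ≤ max_{[-1,1]} |p| · T_n(y)` for `y ≥ 1`, into a point
`λ ∈ [m, M]` with `|P_n(λ)| ≥ 1 / T_n(ρ)`; the one-dimensional quadratic with curvature `λ`
attains the bound.
-/

open Polynomial Set

theorem one_le_add_div_sub {m M : ℝ} (hm : 0 ≤ m) (hmM : m < M) : 1 ≤ (M + m) / (M - m) :=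
  (one_le_div (sub_pos.mpr hmM)).mpr (by linarith)

namespace Polynomial.Chebyshev

theorem abs_eval_le_mul_eval_T_real {n : ℕ} {P : ℝ[X]} (hPdeg : P.natDegree ≤ n) {c : ℝ}
    (hPbnd : ∀ x ∈ Icc (-1) 1, |P.eval x| ≤ c) {y : ℝ} (hy : 1 ≤ y) :
    |P.eval y| ≤ c * (T ℝ n).eval y := by
  have hc : 0 ≤ c := (abs_nonneg _).trans (hPbnd 1 (by norm_num))
  rcases hc.eq_or_lt with rfl | hc
  · suffices P = 0 by simp [this]
    refine P.eq_zero_of_infinite_isRoot ((Icc_infinite (by norm_num : (-1 : ℝ) < 1)).mono ?_)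
    exact fun x hx => abs_nonpos_iff.mp (hPbnd x hx)
  have hle (s : ℝ) (hs : |s| = c⁻¹) : s * P.eval y ≤ (T ℝ n).eval y := by
    have hdeg : (s • P).degree ≤ n :=
      degree_le_of_natDegree_le ((natDegree_smul_le s P).trans hPdeg)
    have hbnd : ∀ x ∈ Icc (-1) 1, |(s • P).eval x| ≤ 1 := fun x hx => by
      rw [eval_smul, smul_eq_mul, abs_mul, hs, inv_mul_le_iff₀ hc, mul_one]
      exact hPbnd x hx
    simpa using eval_iterate_derivative_le_of_forall_abs_le_one (k := 0) hy hdeg hbnd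
  rw [← inv_mul_le_iff₀ hc, ← abs_of_pos (inv_pos.mpr hc), ← abs_mul, abs_le]
  constructor
  · linarith [hle (-c⁻¹) (by simp [abs_of_pos hc])]
  · exact hle c⁻¹ (abs_of_pos (inv_pos.mpr hc))

theorem exists_mem_Icc_abs_eval_zero_le_mul_abs_eval {m M : ℝ} (hm : 0 ≤ m) (hmM : m < M) {n : ℕ}
    {P : ℝ[X]} (hPdeg : P.natDegree ≤ n) :
    ∃ lam ∈ Icc m M, |P.eval 0| ≤ (T ℝ n).eval ((M + m) / (M - m)) * |P.eval lam| := by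
  set q : ℝ[X] := Polynomial.C ((M + m) / 2) - Polynomial.C ((M - m) / 2) * X
  have hq_eval (x : ℝ) : q.eval x = (M + m) / 2 - (M - m) / 2 * x := by simp [q]
  have hq_mapsTo : MapsTo q.eval (Icc (-1) 1) (Icc m M) := fun x hx => by
    simp only [mem_Icc, hq_eval]; constructor <;> nlinarith [hx.1, hx.2]
  have hq_root : q.eval ((M + m) / (M - m)) = 0 := by
    rw [hq_eval]; field_simp [(sub_pos.mpr hmM).ne']; ring
  have hdeg : (P.comp q).natDegree ≤ n := by
    have hq_deg : q.natDegree ≤ 1 := by simp only [q]; compute_degree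
    simpa using natDegree_comp_le.trans (Nat.mul_le_mul hPdeg hq_deg)
  obtain ⟨x₀, hx₀, hmax⟩ := isCompact_Icc.exists_isMaxOn
    (nonempty_Icc.mpr (by norm_num : (-1 : ℝ) ≤ 1)) (P.comp q).continuous.abs.continuousOn
  refine ⟨q.eval x₀, hq_mapsTo hx₀, ?_⟩
  have := abs_eval_le_mul_eval_T_real hdeg (fun x hx => hmax hx) (one_le_add_div_sub hm hmM)
  simp only [eval_comp, hq_root] at this
  rwa [mul_comm]

end Polynomial.Chebyshev

noncomputable def residualPoly (α : ℕ → ℝ) (n : ℕ) : ℝ[X] :=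
  ∏ t ∈ Finset.range n, (1 - C (α t) * X)

theorem natDegree_residualPoly_le (α : ℕ → ℝ) (n : ℕ) : (residualPoly α n).natDegree ≤ n := by
  refine (natDegree_prod_le _ _).trans ((Finset.sum_le_card_nsmul _ _ 1 fun t _ => ?_).trans ?_)
  · compute_degree
  · simp

theorem eval_zero_residualPoly (α : ℕ → ℝ) (n : ℕ) : (residualPoly α n).eval 0 = 1 := by
  simp [residualPoly, eval_prod]

theorem residualPoly_succ (α : ℕ → ℝ) (n : ℕ) :
    residualPoly α (n + 1) = residualPoly α n * (1 - C (α n) * X) :=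
  Finset.prod_range_succ _ _

theorem iterate_eq_eval_residualPoly_smul {E : Type*} [AddCommGroup E] [Module ℝ E] (α : ℕ → ℝ)
    (lam : ℝ) (x : ℕ → E) (hx : ∀ t, x (t + 1) = x t - α t • lam • x t) (t : ℕ) :
    x t = (residualPoly α t).eval lam • x 0 := by
  induction t with
  | zero => simp [residualPoly]
  | succ t ih =>
    rw [hx, ih, residualPoly_succ, eval_mul, smul_smul, smul_smul, ← sub_smul]
    congr 1
    simp only [eval_sub, eval_one, eval_mul, eval_C, eval_X]
    ring

/-- **Chebyshev lower bound:** no stepsize schedule beats the Chebyshev rate on the class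
of `m`-strongly convex, `M`-smooth quadratics. For every schedule `α₀, …, α_{n-1}` there
are a dimension `d`, a symmetric matrix `H` with `mI ⪯ H ⪯ MI`, and an initial point
`x₀ ≠ 0` such that the gradient descent iterates `x_{t+1} = (I − α_t H)x_t` for
`f(x) = ½xᵀHx` satisfy `‖xₙ‖ ≥ ‖x₀‖ / Tₙ((M+m)/(M−m))`. -/
theorem chebyshev_rate_optimal_quadratics (m M : ℝ) (hm : 0 < m) (hmM : m < M)
    (n : ℕ) (α : ℕ → ℝ) :
    ∃ (d : ℕ) (H : Matrix (Fin d) (Fin d) ℝ),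
      H.IsSymm ∧
      (H - m • (1 : Matrix (Fin d) (Fin d) ℝ)).PosSemidef ∧
      (M • (1 : Matrix (Fin d) (Fin d) ℝ) - H).PosSemidef ∧
      ∃ x₀ : EuclideanSpace ℝ (Fin d), x₀ ≠ 0 ∧
        ∀ x : ℕ → EuclideanSpace ℝ (Fin d), x 0 = x₀ →
          (∀ t, x (t + 1) = x t - α t • Matrix.toEuclideanLin H (x t)) →
          ‖x n‖ ≥ ‖x 0‖ / (Polynomial.Chebyshev.T ℝ (n : ℤ)).eval ((M + m) / (M - m)) := by
  obtain ⟨lam, hlam, hP⟩ :=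
    Chebyshev.exists_mem_Icc_abs_eval_zero_le_mul_abs_eval hm.le hmM (natDegree_residualPoly_le α n)
  rw [eval_zero_residualPoly, abs_one] at hP
  have hT : 0 < (Chebyshev.T ℝ n).eval ((M + m) / (M - m)) :=
    one_pos.trans_le (Chebyshev.one_le_eval_T_real _ (one_le_add_div_sub hm.le hmM))
  refine ⟨1, lam • 1, Matrix.isSymm_one.smul lam, ?_, ?_, EuclideanSpace.single 0 1, by simp,
    fun x _ hx => ?_⟩
  · rw [← sub_smul]; exact Matrix.PosSemidef.one.smul (sub_nonneg.mpr hlam.1)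
  · rw [← sub_smul]; exact Matrix.PosSemidef.one.smul (sub_nonneg.mpr hlam.2)
  have hgd (t : ℕ) : x (t + 1) = x t - α t • lam • x t := by simpa using hx t
  rw [iterate_eq_eval_residualPoly_smul α lam x hgd n, norm_smul, Real.norm_eq_abs, ge_iff_le,
    div_le_iff₀ hT]
  linarith [le_mul_of_one_le_left (norm_nonneg (x 0)) hP]
end
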